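/- Let X and Y be complex Banach spaces, m ≥ 2, and Q ∈ 𝓟(^{m−1}X, 𝓛(X,Y)). Then Q = dP for some P ∈ 𝓟(^m X, Y) if and only if y∘d(x∘Q) = x∘d(y∘Q) as elements of 𝓟(^{m−2}X, Y), for all x, y ∈ X. -/

import Mathlib

/-!
If `Q = dP`, then `u ↦ d(x ∘ Q)(u) y` is the second derivative `d²P(u)(y, x)` of the polynomial
`P`, which is symmetric by Schwarz's theorem. Conversely, for symmetric `Q` one has
`d(x ∘ Q)(u) y = (m - 1) Q(u, …, u, y) x`, so the hypothesis says that the `m`-linear map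
`(v₁, …, vₘ) ↦ Q(v₁, …, vₘ₋₁) vₘ` takes the same value at every vector with all entries but one
equal to `u`. Its symmetrization, divided by `m`, is then a symmetric `P` with `dP = Q`.
-/

open Function Fin
open scoped ContDiff Nat

section

variable {𝕜 X Z : Type*} [NontriviallyNormedField 𝕜] [NormedAddCommGroup X] [NormedSpace 𝕜 X]
  [NormedAddCommGroup Z] [NormedSpace 𝕜 Z]

theorem fderiv_fderiv_apply_comm {f : X → Z} (hf : ContDiff 𝕜 ω f) (u x y : X) :
    fderiv 𝕜 (fun v => fderiv 𝕜 f v x) u y = fderiv 𝕜 (fun v => fderiv 𝕜 f v y) u x := by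
  have hdf : DifferentiableAt 𝕜 (fderiv 𝕜 f) u :=
    (hf.fderiv_right (m := 1) le_top).differentiable one_ne_zero u
  simp only [fderiv_clm_apply hdf (differentiableAt_const _), fderiv_fun_const, Pi.zero_apply,
    ContinuousLinearMap.comp_zero, zero_add, ContinuousLinearMap.flip_apply]
  exact hf.contDiffAt.isSymmSndFDerivAt_of_omega.eq y x

namespace ContinuousMultilinearMap

variable {n : ℕ}

theorem contDiff_diag (R : ContinuousMultilinearMap 𝕜 (fun _ : Fin n => X) Z) :
    ContDiff 𝕜 ω fun v => R fun _ => v :=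
  R.contDiff.comp (contDiff_pi.2 fun _ => contDiff_id)

theorem fderiv_diag_apply (R : ContinuousMultilinearMap 𝕜 (fun _ : Fin n => X) Z) (u x : X) :
    fderiv 𝕜 (fun v => R fun _ => v) u x = ∑ i, R (update (fun _ => u) i x) := by
  have hR : HasFDerivAt (fun v => R fun _ => v) (∑ i, R.toContinuousLinearMap (fun _ => u) i) u :=
    HasFDerivAt.multilinear_comp R (g := fun _ v => v) fun _ => hasFDerivAt_id u
  simp [hR.fderiv]

def IsSymmetric (R : ContinuousMultilinearMap 𝕜 (fun _ : Fin n => X) Z) : Prop :=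
  ∀ (σ : Equiv.Perm (Fin n)) (v : Fin n → X), R (v ∘ σ) = R v

namespace IsSymmetric

variable {R : ContinuousMultilinearMap 𝕜 (fun _ : Fin n => X) Z}

theorem continuousLinearMap_comp {W : Type*} [NormedAddCommGroup W] [NormedSpace 𝕜 W]
    (hR : R.IsSymmetric) (L : Z →L[𝕜] W) : (L.compContinuousMultilinearMap R).IsSymmetric :=
  fun σ v => by simp [hR σ v]

theorem map_update_const (hR : R.IsSymmetric) (u x : X) (i j : Fin n) :
    R (update (fun _ => u) i x) = R (update (fun _ => u) j x) := by
  have h := hR (Equiv.swap i j) (update (fun _ => u) i x)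
  rwa [update_comp_equiv, Equiv.symm_swap, Equiv.swap_apply_left, eq_comm] at h

theorem fderiv_diag_apply (hR : R.IsSymmetric) (u x : X) (i : Fin n) :
    fderiv 𝕜 (fun v => R fun _ => v) u x = (n : 𝕜) • R (update (fun _ => u) i x) := by
  rw [R.fderiv_diag_apply, Finset.sum_congr rfl fun j _ => hR.map_update_const u x j i,
    Finset.sum_const, Finset.card_univ, Fintype.card_fin, Nat.cast_smul_eq_nsmul]

theorem fderiv_diag_apply_apply
    {Q : ContinuousMultilinearMap 𝕜 (fun _ : Fin n => X) (X →L[𝕜] Z)} (hQ : Q.IsSymmetric)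
    (u x y : X) (i : Fin n) :
    fderiv 𝕜 (fun v => Q (fun _ => v) x) u y = (n : 𝕜) • Q (update (fun _ => u) i y) x :=
  (hQ.continuousLinearMap_comp (ContinuousLinearMap.apply 𝕜 Z x)).fderiv_diag_apply u y i

end IsSymmetric

def symmetrize (R : ContinuousMultilinearMap 𝕜 (fun _ : Fin n => X) Z) :
    ContinuousMultilinearMap 𝕜 (fun _ : Fin n => X) Z :=
  (n ! : 𝕜)⁻¹ • ∑ σ : Equiv.Perm (Fin n), R.domDomCongr σ

theorem isSymmetric_symmetrize (R : ContinuousMultilinearMap 𝕜 (fun _ : Fin n => X) Z) :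
    R.symmetrize.IsSymmetric := by
  intro τ v
  simp only [symmetrize, smul_apply, sum_apply, domDomCongr_apply]
  congr 1
  exact Fintype.sum_equiv (Equiv.mulLeft τ) _ _ fun σ => rfl

theorem symmetrize_update_const [CharZero 𝕜]
    {R : ContinuousMultilinearMap 𝕜 (fun _ : Fin n => X) Z} {u x : X} {z : Z}
    (h : ∀ i, R (update (fun _ => u) i x) = z) (i : Fin n) :
    R.symmetrize (update (fun _ => u) i x) = z := by
  have hσ : ∀ σ : Equiv.Perm (Fin n), R.domDomCongr σ (update (fun _ => u) i x) = z := fun σ => by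
    rw [domDomCongr_apply, ← h (σ.symm i)]
    exact congrArg R (update_comp_equiv _ σ i x)
  simp only [symmetrize, smul_apply, sum_apply, hσ, Finset.sum_const, Finset.card_univ,
    Fintype.card_perm, Fintype.card_fin, ← Nat.cast_smul_eq_nsmul 𝕜, smul_smul]
  rw [inv_mul_cancel₀ (Nat.cast_ne_zero.2 n.factorial_ne_zero), one_smul]

namespace IsSymmetric

variable {Q : ContinuousMultilinearMap 𝕜 (fun _ : Fin (n + 1) => X) (X →L[𝕜] Z)}

theorem uncurryRight_update_const (hQ : Q.IsSymmetric)
    (hQx : ∀ u x y, Q (update (fun _ => u) (last n) y) x = Q (update (fun _ => u) (last n) x) y)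
    (u x : X) (i : Fin (n + 2)) :
    Q.uncurryRight (update (fun _ => u) i x) = Q (fun _ => u) x := by
  induction i using lastCases with
  | last => rw [uncurryRight_apply, init_update_last, update_self]; rfl
  | cast j =>
    rw [uncurryRight_apply, init_update_castSucc, update_of_ne (castSucc_lt_last j).ne']
    calc Q (update (fun _ => u) j x) u = Q (update (fun _ => u) (last n) x) u :=
          congrArg (· u) (hQ.map_update_const u x j (last n))
      _ = Q (fun _ => u) x := by rw [hQx, update_eq_self]

theorem exists_fderiv_diag_eq [CharZero 𝕜] (hQ : Q.IsSymmetric)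
    (hdQ : ∀ u x y, fderiv 𝕜 (fun v => Q (fun _ => v) x) u y
      = fderiv 𝕜 (fun v => Q (fun _ => v) y) u x) :
    ∃ P : ContinuousMultilinearMap 𝕜 (fun _ : Fin (n + 2) => X) Z,
      P.IsSymmetric ∧ ∀ u x, Q (fun _ => u) x = fderiv 𝕜 (fun v => P fun _ => v) u x := by
  have hQx : ∀ u x y,
      Q (update (fun _ => u) (last n) y) x = Q (update (fun _ => u) (last n) x) y := by
    intro u x y
    have h := hdQ u x y
    rw [hQ.fderiv_diag_apply_apply u x y (last n), hQ.fderiv_diag_apply_apply u y x (last n)] at h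
    exact smul_right_injective Z (Nat.cast_ne_zero.2 n.succ_ne_zero) h
  refine ⟨(((n + 2 : ℕ) : 𝕜)⁻¹ • Q.uncurryRight).symmetrize, isSymmetric_symmetrize _,
    fun u x => ?_⟩
  rw [(isSymmetric_symmetrize _).fderiv_diag_apply u x 0, symmetrize_update_const, smul_smul,
    mul_inv_cancel₀ (Nat.cast_ne_zero.2 (n + 1).succ_ne_zero), one_smul]
  intro i
  rw [smul_apply, hQ.uncurryRight_update_const hQx]

end IsSymmetric

end ContinuousMultilinearMap

end

theorem stmt13_general (X Y : Type*) [NormedAddCommGroup X] [NormedSpace ℂ X]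
    [NormedAddCommGroup Y] [NormedSpace ℂ Y] (k : ℕ)
    (Q : ContinuousMultilinearMap ℂ (fun _ : Fin (k + 1) => X) (X →L[ℂ] Y))
    (hQ : ∀ (σ : Equiv.Perm (Fin (k + 1))) (v : Fin (k + 1) → X), Q (v ∘ σ) = Q v) :
    (∃ P : ContinuousMultilinearMap ℂ (fun _ : Fin (k + 2) => X) Y,
        (∀ (σ : Equiv.Perm (Fin (k + 2))) (v : Fin (k + 2) → X), P (v ∘ σ) = P v) ∧
        ∀ u x : X, Q (fun _ => u) x = fderiv ℂ (fun v : X => P fun _ => v) u x) ↔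
    (∀ x y : X,
        (fun u : X => fderiv ℂ (fun v : X => Q (fun _ => v) x) u y) =
          fun u : X => fderiv ℂ (fun v : X => Q (fun _ => v) y) u x) := by
  constructor
  · rintro ⟨P, -, hPQ⟩ x y
    have hQP : ∀ a, (fun v => Q (fun _ => v) a) = fun v => fderiv ℂ (fun w => P fun _ => w) v a :=
      fun a => funext fun v => hPQ v a
    funext u
    rw [hQP x, hQP y]
    exact fderiv_fderiv_apply_comm P.contDiff_diag u x y
  · intro h
    exact ContinuousMultilinearMap.IsSymmetric.exists_fderiv_diag_eq hQ fun u x y =>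
      congrFun (h x y) u

/-- vector-valued version of Statement 5. Let `X, Y` be complex Banach
spaces and `m = k + 2 ≥ 2`.  A continuous `(m-1)`-homogeneous polynomial
`Q ∈ 𝓟(^{m-1}X, 𝓛(X,Y))` is the differential `dP` of some `P ∈ 𝓟(^m X, Y)` iff
`y ∘ d(x ∘ Q) = x ∘ d(y ∘ Q)` as elements of `𝓟(^{m-2}X, Y)`, for all `x, y ∈ X`. -/
theorem stmt13 (X Y : Type*) [NormedAddCommGroup X] [NormedSpace ℂ X] [CompleteSpace X]
    [NormedAddCommGroup Y] [NormedSpace ℂ Y] [CompleteSpace Y] (k : ℕ)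
    (Q : ContinuousMultilinearMap ℂ (fun _ : Fin (k + 1) => X) (X →L[ℂ] Y))
    (hQ : ∀ (σ : Equiv.Perm (Fin (k + 1))) (v : Fin (k + 1) → X), Q (v ∘ σ) = Q v) :
    (∃ P : ContinuousMultilinearMap ℂ (fun _ : Fin (k + 2) => X) Y,
        (∀ (σ : Equiv.Perm (Fin (k + 2))) (v : Fin (k + 2) → X), P (v ∘ σ) = P v) ∧
        ∀ u x : X, Q (fun _ => u) x = fderiv ℂ (fun v : X => P fun _ => v) u x) ↔
    (∀ x y : X,
        (fun u : X => fderiv ℂ (fun v : X => Q (fun _ => v) x) u y) =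
          fun u : X => fderiv ℂ (fun v : X => Q (fun _ => v) y) u x) :=
  stmt13_general X Y k Q hQ
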